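/- Fix integers N_A ≥ 1 and N_B ≥ 2 with N_B even, and set d_A = 2^{N_A}, d_B = 2^{N_B}. For every unit vector Ψ ∈ ℂ^{({0,1}^{N_A})} ⊗ ℂ^{({0,1}^{N_B})} and all unit vectors v, w ∈ ℂ^{({0,1}^{N_A})}, the inequality |F_v(Ψ) − F_w(Ψ)| ≤ √2 · d_B · ‖|v⟩⟨v| − |w⟩⟨w|‖₁ holds, where ‖M‖₁ = tr√(M†M) is the trace norm and |u⟩⟨u| = u u† is the rank-one projection onto the unit vector u. -/

import Mathlib

noncomputable section
open scoped BigOperators Classical ComplexConjugate ComplexOrder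

/-- Vectors of an `n`-qubit system, as functions on bitstrings. -/
abbrev QVec (n : ℕ) := (Fin n → Bool) → ℂ

/-- Vectors of a bipartite `(nA + nB)`-qubit system. -/
abbrev QState (nA nB : ℕ) := ((Fin nA → Bool) × (Fin nB → Bool)) → ℂ

/-- The standard inner product, conjugate-linear in the first argument. -/
def qInner {I : Type*} [Fintype I] (ψ φ : I → ℂ) : ℂ :=
  ∑ x, (starRingEnd ℂ) (ψ x) * φ x

/-- The Hilbert-space (Euclidean) norm. -/
def qNorm {I : Type*} [Fintype I] (ψ : I → ℂ) : ℝ :=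
  Real.sqrt (qInner ψ ψ).re

/-- The Pauli matrix σ_y = [[0, -i], [i, 0]], indexed by `Bool`. -/
def sigmaY : Bool → Bool → ℂ := fun x y =>
  if x = y then 0 else if x = false then -Complex.I else Complex.I

/-- The spin-flipped vector `ψ̃ = σ_y^{⊗n} ψ̄`. -/
def spinFlip {n : ℕ} (ψ : QVec n) : QVec n :=
  fun x => ∑ y, (∏ k, sigmaY (x k) (y k)) * (starRingEnd ℂ) (ψ y)

/-- The (unnormalized) post-measurement vector `P_v(Ψ)` on the `B` system. -/
def Pv {nA nB : ℕ} (v : QVec nA) (Ψ : QState nA nB) : QVec nB :=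
  fun b => ∑ a, (starRingEnd ℂ) (v a) * Ψ (a, b)

/-- `F_v(Ψ) = |⟨P_v(Ψ), P̃_v(Ψ)⟩|`. -/
def Fv {nA nB : ℕ} (v : QVec nA) (Ψ : QState nA nB) : ℝ :=
  ‖qInner (Pv v Ψ) (spinFlip (Pv v Ψ))‖

/-- The trace norm `‖M‖₁ = tr √(MᴴM)` of a complex square matrix. -/
def traceNorm {I : Type*} [Fintype I] [DecidableEq I] (M : Matrix I I ℂ) : ℝ :=
  ((((Matrix.posSemidef_conjTranspose_mul_self M).isHermitian.eigenvectorUnitary : Matrix I I ℂ) *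
    Matrix.diagonal (((↑) : ℝ → ℂ) ∘ (√·) ∘ (Matrix.posSemidef_conjTranspose_mul_self M).isHermitian.eigenvalues) *
    (star (Matrix.posSemidef_conjTranspose_mul_self M).isHermitian.eigenvectorUnitary : Matrix I I ℂ)).trace).re

/-- The rank-one outer product `|u⟩⟨u| = u u†` of a vector. -/
def outerP {I : Type*} (u : I → ℂ) : Matrix I I ℂ :=
  Matrix.of fun i j => u i * (starRingEnd ℂ) (u j)

namespace FvAux

variable {I : Type*} [Fintype I]

lemma qInner_eq_inner (ψ φ : I → ℂ) :
    qInner ψ φ = @inner ℂ (EuclideanSpace ℂ I) _ (WithLp.toLp 2 ψ) (WithLp.toLp 2 φ) := by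
  simp [qInner, PiLp.inner_apply, RCLike.inner_apply, mul_comm]

lemma qNorm_eq_norm (ψ : I → ℂ) : qNorm ψ = ‖(WithLp.toLp 2 ψ : EuclideanSpace ℂ I)‖ := by
  rw [@norm_eq_sqrt_re_inner ℂ, qNorm, qInner_eq_inner]
  rfl

lemma abs_qInner_le (ψ φ : I → ℂ) : ‖qInner ψ φ‖ ≤ qNorm ψ * qNorm φ := by
  rw [qInner_eq_inner, qNorm_eq_norm, qNorm_eq_norm]
  exact norm_inner_le_norm _ _

lemma qInner_self (ψ : I → ℂ) :
    qInner ψ ψ = ((∑ x, Complex.normSq (ψ x) : ℝ) : ℂ) := by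
  unfold qInner
  push_cast
  refine Finset.sum_congr rfl fun x _ => ?_
  rw [mul_comm, Complex.mul_conj]

lemma qNorm_sq' (ψ : I → ℂ) : qNorm ψ ^ 2 = ∑ x, Complex.normSq (ψ x) := by
  rw [qNorm, qInner_self, Complex.ofReal_re, Real.sq_sqrt]
  exact Finset.sum_nonneg fun x _ => Complex.normSq_nonneg _

lemma qNorm_nonneg (ψ : I → ℂ) : 0 ≤ qNorm ψ := Real.sqrt_nonneg _

lemma qInner_self_eq_one {ψ : I → ℂ} (h : qNorm ψ = 1) : qInner ψ ψ = 1 := by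
  have h2 : (∑ x, Complex.normSq (ψ x) : ℝ) = 1 := by
    rw [← qNorm_sq', h, one_pow]
  rw [qInner_self, h2, Complex.ofReal_one]

lemma qInner_conj_symm (ψ φ : I → ℂ) :
    qInner ψ φ = (starRingEnd ℂ) (qInner φ ψ) := by
  unfold qInner
  rw [map_sum]
  refine Finset.sum_congr rfl fun x _ => ?_
  simp [mul_comm]

lemma qInner_sub_left (f g h : I → ℂ) :
    qInner (f - g) h = qInner f h - qInner g h := by
  simp [qInner, sub_mul, Finset.sum_sub_distrib]

lemma qInner_sub_right (f g h : I → ℂ) :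
    qInner f (g - h) = qInner f g - qInner f h := by
  simp [qInner, mul_sub, Finset.sum_sub_distrib]

lemma qInner_smul (c d : ℂ) (f g : I → ℂ) :
    qInner (fun x => c * f x) (fun x => d * g x)
      = (starRingEnd ℂ) c * d * qInner f g := by
  simp only [qInner, map_mul, Finset.mul_sum]
  refine Finset.sum_congr rfl fun x _ => ?_
  ring

lemma spinFlip_apply {n : ℕ} (ψ : QVec n) (x : Fin n → Bool) :
    spinFlip ψ x
      = (∏ k, sigmaY (x k) (!(x k))) * (starRingEnd ℂ) (ψ (fun k => !(x k))) := by
  unfold spinFlip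
  rw [Finset.sum_eq_single (fun k => !(x k))]
  · intro y _ hy
    have : ∃ k, y k = x k := by
      by_contra hcon
      push_neg at hcon
      apply hy
      funext k
      have := hcon k
      cases h : x k <;> cases h' : y k <;> simp_all
    obtain ⟨k, hk⟩ := this
    rw [Finset.prod_eq_zero (Finset.mem_univ k), zero_mul]
    simp [sigmaY, hk]
  · intro h; exact absurd (Finset.mem_univ _) h

lemma abs_spinCoeff {n : ℕ} (x : Fin n → Bool) :
    ‖∏ k, sigmaY (x k) (!(x k))‖ = 1 := by
  rw [norm_prod]
  refine Finset.prod_eq_one fun k _ => ?_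
  cases h : x k <;> simp [sigmaY]

lemma qNorm_spinFlip {n : ℕ} (ψ : QVec n) : qNorm (spinFlip ψ) = qNorm ψ := by
  have h : qNorm (spinFlip ψ) ^ 2 = qNorm ψ ^ 2 := by
    rw [qNorm_sq', qNorm_sq']
    have e : Function.Involutive (fun (x : Fin n → Bool) => (fun k => !(x k))) := by
      intro x; funext k; simp
    rw [← Equiv.sum_comp e.toPerm (fun x => Complex.normSq (ψ x))]
    refine Finset.sum_congr rfl fun x _ => ?_
    rw [spinFlip_apply, Complex.normSq_mul, Complex.normSq_conj,
      ← Complex.sq_norm (∏ k, sigmaY (x k) (!(x k))), abs_spinCoeff]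
    simp [Function.Involutive.toPerm]
  have h1 : 0 ≤ qNorm (spinFlip ψ) := Real.sqrt_nonneg _
  have h2 : 0 ≤ qNorm ψ := Real.sqrt_nonneg _
  rw [← Real.sqrt_sq h1, h, Real.sqrt_sq h2]

lemma Pv_sub {nA nB : ℕ} (x y : QVec nA) (Ψ : QState nA nB) :
    Pv (x - y) Ψ = Pv x Ψ - Pv y Ψ := by
  funext b
  simp [Pv, sub_mul, Finset.sum_sub_distrib]

lemma spinFlip_sub {n : ℕ} (f g : QVec n) :
    spinFlip (f - g) = spinFlip f - spinFlip g := by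
  funext x
  simp [spinFlip, mul_sub, Finset.sum_sub_distrib]

lemma qNorm_Pv_le {nA nB : ℕ} (v : QVec nA) (Ψ : QState nA nB) :
    qNorm (Pv v Ψ) ≤ qNorm v * qNorm Ψ := by
  have hb : ∀ b, Complex.normSq (Pv v Ψ b)
      ≤ qNorm v ^ 2 * ∑ a, Complex.normSq (Ψ (a, b)) := by
    intro b
    have h1 : ‖qInner v (fun a => Ψ (a, b))‖ ≤ qNorm v * qNorm (fun a => Ψ (a, b)) :=
      abs_qInner_le _ _
    have h2 : Pv v Ψ b = qInner v (fun a => Ψ (a, b)) := rfl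
    have h3 : Complex.normSq (Pv v Ψ b) = ‖Pv v Ψ b‖ ^ 2 := by
      rw [Complex.sq_norm]
    rw [h3, h2, ← qNorm_sq']
    have h4 : (0:ℝ) ≤ ‖qInner v fun a => Ψ (a, b)‖ := norm_nonneg _
    calc ‖qInner v fun a => Ψ (a, b)‖ ^ 2
        ≤ (qNorm v * qNorm fun a => Ψ (a, b)) ^ 2 := by nlinarith [Real.sqrt_nonneg (qInner v v).re]
      _ = qNorm v ^ 2 * (qNorm fun a => Ψ (a, b)) ^ 2 := by ring
  have hsum : qNorm (Pv v Ψ) ^ 2 ≤ qNorm v ^ 2 * qNorm Ψ ^ 2 := by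
    rw [qNorm_sq']
    calc ∑ b, Complex.normSq (Pv v Ψ b)
        ≤ ∑ b, qNorm v ^ 2 * ∑ a, Complex.normSq (Ψ (a, b)) :=
          Finset.sum_le_sum fun b _ => hb b
      _ = qNorm v ^ 2 * ∑ b, ∑ a, Complex.normSq (Ψ (a, b)) := by rw [Finset.mul_sum]
      _ = qNorm v ^ 2 * qNorm Ψ ^ 2 := by
          rw [qNorm_sq' Ψ, Finset.sum_comm, Fintype.sum_prod_type]
  have h1 : 0 ≤ qNorm (Pv v Ψ) := Real.sqrt_nonneg _
  have h2 : 0 ≤ qNorm v := Real.sqrt_nonneg _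
  have h3 : 0 ≤ qNorm Ψ := Real.sqrt_nonneg _
  calc qNorm (Pv v Ψ) = Real.sqrt (qNorm (Pv v Ψ) ^ 2) := (Real.sqrt_sq h1).symm
    _ ≤ Real.sqrt (qNorm v ^ 2 * qNorm Ψ ^ 2) := Real.sqrt_le_sqrt hsum
    _ = qNorm v * qNorm Ψ := by rw [← mul_pow, Real.sqrt_sq (mul_nonneg h2 h3)]

lemma Fv_phase {nA nB : ℕ} (α : ℂ) (hα : ‖α‖ = 1) (v : QVec nA) (Ψ : QState nA nB) :
    Fv (fun a => α * v a) Ψ = Fv v Ψ := by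
  have hP : Pv (fun a => α * v a) Ψ = fun b => (starRingEnd ℂ) α * Pv v Ψ b := by
    funext b
    simp [Pv, map_mul, Finset.mul_sum, mul_assoc]
  have hS : spinFlip (fun b => (starRingEnd ℂ) α * Pv v Ψ b)
      = fun x => α * spinFlip (Pv v Ψ) x := by
    funext x
    simp only [spinFlip, map_mul, Complex.conj_conj, Finset.mul_sum]
    refine Finset.sum_congr rfl fun y _ => ?_
    ring
  unfold Fv
  rw [hP, hS, qInner_smul, Complex.conj_conj, norm_mul]
  rw [norm_mul, hα]
  ring

lemma trace_sq_le_sq_trace {J : Type*} [Fintype J] [DecidableEq J]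
    {S : Matrix J J ℂ} (hS : S.PosSemidef) :
    (Matrix.trace (S * S)).re ≤ ((Matrix.trace S).re) ^ 2 := by
  have hH := hS.1
  set U : Matrix J J ℂ := (hH.eigenvectorUnitary : Matrix J J ℂ)
  set D : Matrix J J ℂ := Matrix.diagonal (RCLike.ofReal ∘ hH.eigenvalues)
  have hU' : star U * U = 1 := (Matrix.mem_unitaryGroup_iff').mp hH.eigenvectorUnitary.2
  have hspec : S = U * D * star U := hH.spectral_theorem
  have htr : Matrix.trace S = ∑ i, (hH.eigenvalues i : ℂ) := by
    conv_lhs => rw [hspec]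
    rw [Matrix.trace_mul_cycle, hU', Matrix.one_mul, Matrix.trace_diagonal]
    rfl
  have htr2 : Matrix.trace (S * S) = ∑ i, ((hH.eigenvalues i : ℂ)) ^ 2 := by
    have h : S * S = U * (D * D) * star U := by
      rw [hspec]
      calc U * D * star U * (U * D * star U)
          = U * (D * (star U * U) * D) * star U := by noncomm_ring
        _ = U * (D * D) * star U := by rw [hU', Matrix.mul_one]
    rw [h, Matrix.trace_mul_cycle, hU', Matrix.one_mul,
      Matrix.diagonal_mul_diagonal, Matrix.trace_diagonal]
    simp [pow_two]
  rw [htr, htr2, Complex.re_sum, Complex.re_sum]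
  simp only [← Complex.ofReal_pow, Complex.ofReal_re]
  exact Finset.sum_sq_le_sq_sum_of_nonneg fun i _ => hS.eigenvalues_nonneg i

lemma frobenius_le_traceNorm {J : Type*} [Fintype J] [DecidableEq J] (M : Matrix J J ℂ) :
    Real.sqrt ((Matrix.trace (Matrix.conjTranspose M * M)).re) ≤ traceNorm M := by
  unfold traceNorm
  generalize hH : (Matrix.posSemidef_conjTranspose_mul_self M).isHermitian = H
  have hnn : ∀ i, 0 ≤ H.eigenvalues i := fun i =>
    (Matrix.posSemidef_conjTranspose_mul_self M).eigenvalues_nonneg i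
  have hU' : star (H.eigenvectorUnitary : Matrix J J ℂ) * (H.eigenvectorUnitary : Matrix J J ℂ) = 1 :=
    (Matrix.mem_unitaryGroup_iff').mp H.eigenvectorUnitary.2
  have hspec : Matrix.conjTranspose M * M = (H.eigenvectorUnitary : Matrix J J ℂ) *
      Matrix.diagonal (RCLike.ofReal ∘ H.eigenvalues) * star (H.eigenvectorUnitary : Matrix J J ℂ) :=
    H.spectral_theorem
  have htrM : (Matrix.trace (Matrix.conjTranspose M * M)).re = ∑ i, H.eigenvalues i := by
    conv_lhs => rw [hspec]
    rw [Matrix.trace_mul_cycle, hU', Matrix.one_mul, Matrix.trace_diagonal, Complex.re_sum]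
    simp
  rw [Matrix.trace_mul_cycle, hU', Matrix.one_mul, Matrix.trace_diagonal, Complex.re_sum, htrM]
  simp only [Function.comp_apply, Complex.ofReal_re]
  have hsq : ∑ i, H.eigenvalues i = ∑ i, (Real.sqrt (H.eigenvalues i)) ^ 2 :=
    Finset.sum_congr rfl fun i _ => (Real.sq_sqrt (hnn i)).symm
  rw [hsq]
  calc Real.sqrt (∑ i, (Real.sqrt (H.eigenvalues i)) ^ 2)
      ≤ Real.sqrt ((∑ i, Real.sqrt (H.eigenvalues i)) ^ 2) :=
        Real.sqrt_le_sqrt (Finset.sum_sq_le_sq_sum_of_nonneg fun i _ => Real.sqrt_nonneg _)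
    _ = ∑ i, Real.sqrt (H.eigenvalues i) :=
        Real.sqrt_sq (Finset.sum_nonneg fun i _ => Real.sqrt_nonneg _)

lemma trace_outer (v w : I → ℂ) :
    Matrix.trace (Matrix.conjTranspose (outerP v - outerP w) * (outerP v - outerP w))
      = qInner v v * qInner v v - qInner v w * qInner w v
        - qInner w v * qInner v w + qInner w w * qInner w w := by
  have lhs : Matrix.trace (Matrix.conjTranspose (outerP v - outerP w) * (outerP v - outerP w))
      = ∑ i, ∑ j, (starRingEnd ℂ) ((outerP v - outerP w) j i) * ((outerP v - outerP w) j i) := by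
    simp [Matrix.trace, Matrix.mul_apply, Matrix.conjTranspose_apply]
  rw [lhs]
  unfold outerP qInner
  simp only [Matrix.sub_apply, Matrix.of_apply, map_sub, map_mul, Complex.conj_conj]
  rw [Finset.sum_comm]
  rw [Finset.sum_mul_sum, Finset.sum_mul_sum, Finset.sum_mul_sum, Finset.sum_mul_sum]
  simp only [← Finset.sum_sub_distrib, ← Finset.sum_add_distrib]
  refine Finset.sum_congr rfl fun j _ => Finset.sum_congr rfl fun i _ => ?_
  ring

end FvAux

open FvAux in
theorem Fv_lipschitz_in_measurement_vector
    (NA NB : ℕ) (hNA : 1 ≤ NA) (hNB : 2 ≤ NB) (hNBeven : Even NB)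
    (dA dB : ℕ) (hdA : dA = 2 ^ NA) (hdB : dB = 2 ^ NB)
    (Ψ : QState NA NB) (hΨ : qNorm Ψ = 1)
    (v w : QVec NA) (hv : qNorm v = 1) (hw : qNorm w = 1) :
    |Fv v Ψ - Fv w Ψ| ≤ Real.sqrt 2 * dB * traceNorm (outerP v - outerP w) := by
  classical
  set c : ℂ := qInner w v with hc
  set t : ℝ := ‖c‖ with ht
  have ht0 : 0 ≤ t := norm_nonneg _
  have ht1 : t ≤ 1 := by
    have h := abs_qInner_le w v
    rw [hw, hv] at h
    simpa using h
  set α : ℂ := if c = 0 then 1 else (starRingEnd ℂ) c / (t : ℂ) with hαdef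
  have hα : ‖α‖ = 1 := by
    by_cases h : c = 0
    · simp [hαdef, h]
    · have htne : t ≠ 0 := by
        simpa [ht] using h
      rw [hαdef, if_neg h, norm_div, Complex.norm_conj, Complex.norm_real, Real.norm_of_nonneg ht0, ← ht]
      field_simp
  set v' : QVec NA := fun a => α * v a with hv'def
  have hαc : α * c = (t : ℂ) := by
    by_cases h : c = 0
    · simp [hαdef, h, ht]
    · have htne : (t:ℂ) ≠ 0 := by
        simpa [ht, Complex.ofReal_eq_zero] using h
      rw [hαdef, if_neg h]
      field_simp
      rw [mul_comm, Complex.mul_conj, Complex.normSq_eq_norm_sq, ← ht]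
      push_cast
      ring
  have hwv' : qInner w v' = (t : ℂ) := by
    have h : qInner w v' = α * qInner w v := by
      simp only [qInner, hv'def, Finset.mul_sum]
      refine Finset.sum_congr rfl fun x _ => ?_
      ring
    rw [h, ← hc, hαc]
  have hv'1 : qNorm v' = 1 := by
    have h2 : qNorm v' ^ 2 = 1 := by
      rw [qNorm_sq']
      have : ∀ a, Complex.normSq (v' a) = Complex.normSq (v a) := by
        intro a
        rw [hv'def]
        simp only []
        rw [Complex.normSq_mul, ← Complex.sq_norm α, hα]
        ring
      rw [Finset.sum_congr rfl fun a _ => this a, ← qNorm_sq', hv, one_pow]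
    have h1 : 0 ≤ qNorm v' := qNorm_nonneg _
    nlinarith
  have hFv' : Fv v' Ψ = Fv v Ψ := Fv_phase α hα v Ψ
  -- the quadratic quantities
  set P1 : QVec NB := Pv v' Ψ with hP1
  set P2 : QVec NB := Pv w Ψ with hP2
  set Q1 : ℂ := qInner P1 (spinFlip P1) with hQ1
  set Q2 : ℂ := qInner P2 (spinFlip P2) with hQ2
  have hQsplit : Q1 - Q2 = qInner (P1 - P2) (spinFlip P1)
      + qInner P2 (spinFlip P1 - spinFlip P2) := by
    rw [qInner_sub_left, qInner_sub_right, hQ1, hQ2]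
    ring
  -- norms
  have hnP1 : qNorm P1 ≤ 1 := by
    have := qNorm_Pv_le v' Ψ
    rw [hv'1, hΨ] at this
    simpa [hP1] using this
  have hnP2 : qNorm P2 ≤ 1 := by
    have := qNorm_Pv_le w Ψ
    rw [hw, hΨ] at this
    simpa [hP2] using this
  have hnD : qNorm (P1 - P2) ≤ qNorm (v' - w) := by
    have h := qNorm_Pv_le (v' - w) Ψ
    rw [Pv_sub, hΨ, mul_one] at h
    simpa [hP1, hP2] using h
  have hDnonneg : 0 ≤ qNorm (v' - w) := qNorm_nonneg _
  -- bound on |Q1 - Q2|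
  have hQbound : ‖Q1 - Q2‖ ≤ 2 * qNorm (v' - w) := by
    rw [hQsplit]
    have b1 : ‖qInner (P1 - P2) (spinFlip P1)‖ ≤ qNorm (v' - w) := by
      calc ‖qInner (P1 - P2) (spinFlip P1)‖
          ≤ qNorm (P1 - P2) * qNorm (spinFlip P1) := abs_qInner_le _ _
        _ = qNorm (P1 - P2) * qNorm P1 := by rw [qNorm_spinFlip]
        _ ≤ qNorm (v' - w) * 1 := by
            apply mul_le_mul hnD hnP1 (qNorm_nonneg _) hDnonneg
        _ = qNorm (v' - w) := mul_one _
    have b2 : ‖qInner P2 (spinFlip P1 - spinFlip P2)‖ ≤ qNorm (v' - w) := by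
      calc ‖qInner P2 (spinFlip P1 - spinFlip P2)‖
          ≤ qNorm P2 * qNorm (spinFlip P1 - spinFlip P2) := abs_qInner_le _ _
        _ = qNorm P2 * qNorm (P1 - P2) := by rw [← spinFlip_sub, qNorm_spinFlip]
        _ ≤ 1 * qNorm (v' - w) := by
            apply mul_le_mul hnP2 hnD (qNorm_nonneg _) (by norm_num)
        _ = qNorm (v' - w) := one_mul _
    calc ‖qInner (P1 - P2) (spinFlip P1) + qInner P2 (spinFlip P1 - spinFlip P2)‖
        ≤ ‖qInner (P1 - P2) (spinFlip P1)‖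
          + ‖qInner P2 (spinFlip P1 - spinFlip P2)‖ := norm_add_le _ _
      _ ≤ qNorm (v' - w) + qNorm (v' - w) := add_le_add b1 b2
      _ = 2 * qNorm (v' - w) := by ring
  -- left side
  have hLHS : |Fv v Ψ - Fv w Ψ| ≤ 2 * qNorm (v' - w) := by
    rw [← hFv']
    have h : |Fv v' Ψ - Fv w Ψ| ≤ ‖Q1 - Q2‖ := by
      unfold Fv
      exact abs_norm_sub_norm_le _ _
    exact le_trans h hQbound
  -- value of qNorm (v' - w)
  have hsubval : qNorm (v' - w) = Real.sqrt (2 - 2 * t) := by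
    have h : qInner (v' - w) (v' - w) = ((2 - 2 * t : ℝ) : ℂ) := by
      rw [qInner_sub_left, qInner_sub_right, qInner_sub_right,
        qInner_self_eq_one hv'1, qInner_self_eq_one hw,
        qInner_conj_symm v' w, hwv', Complex.conj_ofReal]
      push_cast
      ring
    rw [qNorm, h, Complex.ofReal_re]
  -- trace norm lower bound
  have hTr : (Matrix.trace (Matrix.conjTranspose (outerP v - outerP w)
      * (outerP v - outerP w))).re = 2 - 2 * t ^ 2 := by
    have hvw : qInner v w = (starRingEnd ℂ) c := by
      rw [qInner_conj_symm, hc]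
    have hcc : (starRingEnd ℂ) c * c = ((t ^ 2 : ℝ) : ℂ) := by
      rw [mul_comm, Complex.mul_conj, Complex.normSq_eq_norm_sq, ← ht]
    have hcc' : c * (starRingEnd ℂ) c = ((t ^ 2 : ℝ) : ℂ) := by
      rw [Complex.mul_conj, Complex.normSq_eq_norm_sq, ← ht]
    have hTrC : Matrix.trace (Matrix.conjTranspose (outerP v - outerP w)
        * (outerP v - outerP w)) = ((2 - 2 * t ^ 2 : ℝ) : ℂ) := by
      rw [trace_outer, qInner_self_eq_one hv, qInner_self_eq_one hw, hvw, ← hc, hcc, hcc']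
      push_cast
      ring
    rw [hTrC, Complex.ofReal_re]
  have hTN : Real.sqrt (2 - 2 * t ^ 2) ≤ traceNorm (outerP v - outerP w) := by
    rw [← hTr]
    exact frobenius_le_traceNorm _
  have hmono : Real.sqrt (2 - 2 * t) ≤ Real.sqrt (2 - 2 * t ^ 2) :=
    Real.sqrt_le_sqrt (by nlinarith)
  have hTN2 : Real.sqrt (2 - 2 * t) ≤ traceNorm (outerP v - outerP w) :=
    le_trans hmono hTN
  have hTNpos : 0 ≤ traceNorm (outerP v - outerP w) :=
    le_trans (Real.sqrt_nonneg _) hTN2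
  -- numeric finish
  have hdB4 : (4 : ℝ) ≤ (dB : ℝ) := by
    rw [hdB]
    have : (2:ℕ) ^ 2 ≤ 2 ^ NB := Nat.pow_le_pow_right (by norm_num) hNB
    have h4 : (4:ℕ) ≤ 2 ^ NB := by norm_num at this ⊢; omega
    exact_mod_cast h4
  have hsqrt2 : (1 : ℝ) ≤ Real.sqrt 2 := by
    have := Real.sq_sqrt (by norm_num : (0:ℝ) ≤ 2)
    nlinarith [Real.sqrt_nonneg 2]
  calc |Fv v Ψ - Fv w Ψ| ≤ 2 * qNorm (v' - w) := hLHS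
    _ = 2 * Real.sqrt (2 - 2 * t) := by rw [hsubval]
    _ ≤ 2 * traceNorm (outerP v - outerP w) := by
        apply mul_le_mul_of_nonneg_left hTN2 (by norm_num)
    _ ≤ Real.sqrt 2 * dB * traceNorm (outerP v - outerP w) := by
        apply mul_le_mul_of_nonneg_right _ hTNpos
        nlinarith
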